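/- Let T = [[α, β],[β*, δ]] be a nonnegative bounded operator on X ⊕ U with minimal contraction γ, and let Δ = α^{1/2}(I − γ*γ)α^{1/2} be the Schur complement of T supported by X. Then T admits the factorization T = [[I, α^{1/2}γ*],[0, δ^{1/2}]] · [[Δ, 0],[0, I]] · [[I, 0],[γα^{1/2}, δ^{1/2}]]. -/

import Mathlib

/-! Multiplying out the three block matrices gives
`[[Δ + α^{1/2}γ*γα^{1/2}, α^{1/2}γ*δ^{1/2}],[δ^{1/2}γα^{1/2}, δ^{1/2}δ^{1/2}]]`.
The diagonal entries are `α` and `δ` because `Δ` was defined so that the two terms add up to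
`α^{1/2}α^{1/2}`; the off-diagonal entries are `β*` and, taking adjoints of the selfadjoint
square roots, `β`. -/

open scoped InnerProductSpace

/-- The 2×2 block operator `[[a, b],[c, d]] : X ⊕ U → X ⊕ Y` between Hilbert space
orthogonal direct sums. -/
noncomputable def blk {X U Y : Type*}
    [NormedAddCommGroup X] [InnerProductSpace ℂ X] [CompleteSpace X]
    [NormedAddCommGroup U] [InnerProductSpace ℂ U] [CompleteSpace U]
    [NormedAddCommGroup Y] [InnerProductSpace ℂ Y] [CompleteSpace Y]
    (a : X →L[ℂ] X) (b : U →L[ℂ] X) (c : X →L[ℂ] Y) (d : U →L[ℂ] Y) :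
    WithLp 2 (X × U) →L[ℂ] WithLp 2 (X × Y) :=
  ((WithLp.prodContinuousLinearEquiv 2 ℂ X Y).symm : (X × Y) →L[ℂ] WithLp 2 (X × Y)).comp
    ((((a.comp (ContinuousLinearMap.fst ℂ X U)) + (b.comp (ContinuousLinearMap.snd ℂ X U))).prod
      ((c.comp (ContinuousLinearMap.fst ℂ X U)) + (d.comp (ContinuousLinearMap.snd ℂ X U)))).comp
      ((WithLp.prodContinuousLinearEquiv 2 ℂ X U) : WithLp 2 (X × U) →L[ℂ] (X × U)))

open ContinuousLinearMap

section BlockOperator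

variable {X U V Y : Type*}
    [NormedAddCommGroup X] [InnerProductSpace ℂ X] [CompleteSpace X]
    [NormedAddCommGroup U] [InnerProductSpace ℂ U] [CompleteSpace U]
    [NormedAddCommGroup V] [InnerProductSpace ℂ V] [CompleteSpace V]
    [NormedAddCommGroup Y] [InnerProductSpace ℂ Y] [CompleteSpace Y]

lemma blk_comp_blk (a : X →L[ℂ] X) (b : U →L[ℂ] X) (c : X →L[ℂ] Y) (d : U →L[ℂ] Y)
    (a' : X →L[ℂ] X) (b' : V →L[ℂ] X) (c' : X →L[ℂ] U) (d' : V →L[ℂ] U) :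
    (blk a b c d).comp (blk a' b' c' d') =
      blk (a.comp a' + b.comp c') (a.comp b' + b.comp d')
        (c.comp a' + d.comp c') (c.comp b' + d.comp d') := by
  ext x
  simp [blk, add_add_add_comm]

lemma adjoint_comp_comp_of_isSelfAdjoint {A : U →L[ℂ] U} {B : X →L[ℂ] X}
    (hA : IsSelfAdjoint A) (hB : IsSelfAdjoint B) (γ : X →L[ℂ] U) :
    (A.comp (γ.comp B)).adjoint = B.comp (γ.adjoint.comp A) := by
  rw [adjoint_comp, adjoint_comp, hA.adjoint_eq, hB.adjoint_eq, comp_assoc]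

lemma sqrt_comp_one_sub_comp_sqrt_add {α : X →L[ℂ] X} (hα : 0 ≤ α) (γ : X →L[ℂ] U) :
    (CFC.sqrt α).comp ((1 - γ.adjoint.comp γ).comp (CFC.sqrt α)) +
      ((CFC.sqrt α).comp γ.adjoint).comp (γ.comp (CFC.sqrt α)) = α := by
  simp only [sub_comp, comp_sub, one_def, id_comp, comp_assoc, sub_add_cancel]
  exact CFC.sqrt_mul_sqrt_self α hα

end BlockOperator

theorem statement4_general {X U : Type*}
    [NormedAddCommGroup X] [InnerProductSpace ℂ X] [CompleteSpace X]
    [NormedAddCommGroup U] [InnerProductSpace ℂ U] [CompleteSpace U]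
    (α : X →L[ℂ] X) (β : U →L[ℂ] X) (δ : U →L[ℂ] U)
    (hα : α.IsPositive) (hδ : δ.IsPositive)
    (γ : X →L[ℂ] U)
    (hγfac : β.adjoint = (CFC.sqrt δ).comp (γ.comp (CFC.sqrt α))) :
    blk α β β.adjoint δ =
      (blk 1 ((CFC.sqrt α).comp γ.adjoint) 0 (CFC.sqrt δ)).comp
        ((blk ((CFC.sqrt α).comp ((1 - γ.adjoint.comp γ).comp (CFC.sqrt α))) 0 0 1).comp
          (blk 1 0 (γ.comp (CFC.sqrt α)) (CFC.sqrt δ))) := by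
  have hα₀ : 0 ≤ α := (nonneg_iff_isPositive α).mpr hα
  have hδ₀ : 0 ≤ δ := (nonneg_iff_isPositive δ).mpr hδ
  have hβ : β = (CFC.sqrt α).comp (γ.adjoint.comp (CFC.sqrt δ)) := by
    rw [← adjoint_adjoint β, hγfac, adjoint_comp_comp_of_isSelfAdjoint
      (IsSelfAdjoint.of_nonneg (CFC.sqrt_nonneg δ)) (IsSelfAdjoint.of_nonneg (CFC.sqrt_nonneg α))]
  rw [blk_comp_blk, blk_comp_blk, hγfac, hβ]
  simp only [one_def, id_comp, comp_id, comp_zero, zero_comp, add_zero, zero_add]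
  congr 1
  · exact (sqrt_comp_one_sub_comp_sqrt_add hα₀ γ).symm
  · exact (CFC.sqrt_mul_sqrt_self δ hδ₀).symm

/-- Let `T = [[α, β],[β*, δ]]` be a nonnegative bounded operator on `X ⊕ U`
with minimal contraction `γ`, and let `Δ = α^{1/2}(I − γ*γ)α^{1/2}` be the Schur complement of
`T` supported by `X`. Then
`T = [[I, α^{1/2}γ*],[0, δ^{1/2}]] · [[Δ, 0],[0, I]] · [[I, 0],[γα^{1/2}, δ^{1/2}]]`. -/
theorem statement4 {X U : Type*}
    [NormedAddCommGroup X] [InnerProductSpace ℂ X] [CompleteSpace X]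
    [NormedAddCommGroup U] [InnerProductSpace ℂ U] [CompleteSpace U]
    (α : X →L[ℂ] X) (β : U →L[ℂ] X) (δ : U →L[ℂ] U)
    (hα : α.IsPositive) (hδ : δ.IsPositive)
    (hT : (blk α β β.adjoint δ).IsPositive)
    (γ : X →L[ℂ] U) (hγnorm : ‖γ‖ ≤ 1)
    (hγker : LinearMap.ker (α : X →ₗ[ℂ] X) ≤ LinearMap.ker (γ : X →ₗ[ℂ] U))
    (hγran : LinearMap.range (γ : X →ₗ[ℂ] U) ≤ (LinearMap.range (δ : U →ₗ[ℂ] U)).topologicalClosure)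
    (hγfac : β.adjoint = (CFC.sqrt δ).comp (γ.comp (CFC.sqrt α))) :
    blk α β β.adjoint δ =
      (blk 1 ((CFC.sqrt α).comp γ.adjoint) 0 (CFC.sqrt δ)).comp
        ((blk ((CFC.sqrt α).comp ((1 - γ.adjoint.comp γ).comp (CFC.sqrt α))) 0 0 1).comp
          (blk 1 0 (γ.comp (CFC.sqrt α)) (CFC.sqrt δ))) :=
  statement4_general α β δ hα hδ γ hγfac
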